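/- Let S be a set of n points in general position in the plane with a horizontal segment ab between a, b ∈ S, and suppose s, t ∈ S \ {a, b} are such that s lies strictly above the line through a and b, and t lies strictly below it. Then there exists a plane Hamiltonian path on S with endpoints s and t containing the segment ab as an edge. -/

import Mathlib

open Set
open scoped Classical

noncomputable section

/-- Points in the plane. -/
abbrev Pt : Type := ℝ × ℝ

/-- Orientation determinant of the triple `(a, b, p)`:
positive iff `p` lies strictly to the left of the directed line from `a` to `b`. -/
def det3 (a b p : Pt) : ℝ :=
  (b.1 - a.1) * (p.2 - a.2) - (b.2 - a.2) * (p.1 - a.1)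

/-- A finite point set is in general position if no three of its points are collinear. -/
def GenPos (S : Finset Pt) : Prop :=
  ∀ p ∈ S, ∀ q ∈ S, ∀ r ∈ S,
    p ≠ q → p ≠ r → q ≠ r → ¬ Collinear ℝ ({p, q, r} : Set Pt)

/-- The list of (directed) edges of a polygonal path given by its list of vertices. -/
def edgeList (l : List Pt) : List (Pt × Pt) := l.zip l.tail

/-- The segment `ab` is an edge of the path `l`, i.e. `a` and `b` are consecutive on `l`. -/
def IsEdgeOf (a b : Pt) (l : List Pt) : Prop :=
  (a, b) ∈ edgeList l ∨ (b, a) ∈ edgeList l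

/-- `l` is a plane (crossing-free) Hamiltonian path on the point set `S`:
its vertices are exactly the points of `S`, each visited once, and any two distinct
edges intersect only in common endpoints. -/
def PlanePath (S : Finset Pt) (l : List Pt) : Prop :=
  l.Nodup ∧ l.toFinset = S ∧
  ∀ e ∈ edgeList l, ∀ f ∈ edgeList l, e ≠ f →
    segment ℝ e.1 e.2 ∩ segment ℝ f.1 f.2 ⊆
      (({e.1, e.2} : Set Pt) ∩ ({f.1, f.2} : Set Pt))

/-- Two paths are edge-disjoint: no segment is an edge of both. -/
def EdgeDisjoint (l₁ l₂ : List Pt) : Prop :=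
  ∀ x y : Pt, IsEdgeOf x y l₁ → ¬ IsEdgeOf x y l₂

/-- `p` is a vertex of the boundary of the convex hull of `S`. -/
def HullVertex (S : Finset Pt) (p : Pt) : Prop :=
  p ∈ Set.extremePoints ℝ (convexHull ℝ (S : Set Pt))

/-- `ab` is an edge of the boundary of the convex hull of `S`, i.e. `a` and `b` are
consecutive hull vertices: all other points of `S` lie strictly on one side of line `ab`. -/
def IsHullEdge (S : Finset Pt) (a b : Pt) : Prop :=
  a ∈ S ∧ b ∈ S ∧ a ≠ b ∧
  ((∀ p ∈ S, p ≠ a → p ≠ b → 0 < det3 a b p) ∨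
   (∀ p ∈ S, p ≠ a → p ≠ b → det3 a b p < 0))

/-- The segment `xy` is a bridge over the line through `a` and `b`:
it crosses the line `ℓ(ab)` but not the segment `ab`. -/
def IsBridge (a b x y : Pt) : Prop :=
  det3 a b x * det3 a b y < 0 ∧ segment ℝ x y ∩ segment ℝ a b = ∅

/-- The set of common edges of the two paths is exactly the segment `ab`. -/
def SharesExactly (a b : Pt) (l₁ l₂ : List Pt) : Prop :=
  IsEdgeOf a b l₁ ∧ IsEdgeOf a b l₂ ∧
  ∀ x y : Pt, IsEdgeOf x y l₁ → IsEdgeOf x y l₂ → ({x, y} : Set Pt) = ({a, b} : Set Pt)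

/-!
Split `S` by the line `ab`. The points strictly above it, together with `a`, carry a plane path
from `s` to `a`, by induction: if all points other than the final point `p` (the apex) lie in an
open halfplane bounded by a line through `p`, remove `p` and take as the new apex the first or
the last point `m` in the angular order around `p`, whichever is not the start. All remaining
points then lie strictly on one side of the line `pm`, so appending the edge `mp` creates no
crossing. Symmetrically the points below, together with `b`, carry a plane path from `b` to `t`.
The upper path meets the line `ab` only in `a` and the lower one only in `b`, so joining them by
the edge `ab` gives a plane path.
-/

def wedge (u v : Pt) : ℝ := u.1 * v.2 - u.2 * v.1

lemma wedge_self (u : Pt) : wedge u u = 0 := by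
  unfold wedge; ring

lemma wedge_swap (u v : Pt) : wedge u v = -wedge v u := by
  unfold wedge; ring

def side (c w : Pt) : Pt →ᵃ[ℝ] ℝ where
  toFun z := wedge w (z - c)
  linear :=
    { toFun := wedge w
      map_add' u v := by simp only [wedge, Prod.fst_add, Prod.snd_add]; ring
      map_smul' r u := by
        simp only [wedge, Prod.smul_fst, Prod.smul_snd, smul_eq_mul, RingHom.id_apply]; ring }
  map_vadd' z v := by
    simp only [wedge, vadd_eq_add, Prod.fst_add, Prod.snd_add, Prod.fst_sub, Prod.snd_sub,
      LinearMap.coe_mk, AddHom.coe_mk]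
    ring

lemma side_apply (c w z : Pt) : side c w z = wedge w (z - c) := rfl

section AffineSegment

variable {E : Type*} [AddCommGroup E] [Module ℝ E] (f : E →ᵃ[ℝ] ℝ) {x y z m : E}

lemma AffineMap.apply_mem_segment (hz : z ∈ segment ℝ x y) :
    f z ∈ segment ℝ (f x) (f y) :=
  image_segment ℝ f x y ▸ mem_image_of_mem f hz

lemma AffineMap.eq_right_of_mem_segment (hx : f x ≠ 0) (hy : f y = 0)
    (hz : z ∈ segment ℝ x y) (hfz : f z = 0) : z = y := by
  rw [segment_eq_image_lineMap] at hz
  obtain ⟨θ, -, rfl⟩ := hz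
  rw [AffineMap.apply_lineMap, AffineMap.lineMap_apply_ring, hy, mul_zero, add_zero] at hfz
  obtain rfl : θ = 1 := by linarith [(mul_eq_zero.1 hfz).resolve_right hx]
  exact AffineMap.lineMap_apply_one x y

lemma AffineMap.eq_of_mem_segment_of_apply_nonpos (hm : f m = 0) (hx : x = m ∨ 0 < f x)
    (hy : y = m ∨ 0 < f y) (hxy : x ≠ y) (hz : z ∈ segment ℝ x y) (hfz : f z ≤ 0) :
    z = m ∧ (z = x ∨ z = y) := by
  have hfz' := f.apply_mem_segment hz
  rcases hx with rfl | hx <;> rcases hy with rfl | hy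
  · exact absurd rfl hxy
  · have hz0 : f z = 0 := le_antisymm hfz ((convex_Ici 0).segment_subset hm.ge hy.le hfz')
    have := f.eq_right_of_mem_segment hy.ne' hm (segment_symm ℝ x y ▸ hz) hz0
    exact ⟨this, Or.inl this⟩
  · have hz0 : f z = 0 := le_antisymm hfz ((convex_Ici 0).segment_subset hx.le hm.ge hfz')
    have := f.eq_right_of_mem_segment hx.ne' hm hz hz0
    exact ⟨this, Or.inr this⟩
  · exact absurd ((convex_Ioi 0).segment_subset hx hy hfz') (not_lt.2 hfz)

end AffineSegment

def MeetOnlyAtEnds {E : Type*} [AddCommGroup E] [Module ℝ E] (e e' : E × E) : Prop :=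
  segment ℝ e.1 e.2 ∩ segment ℝ e'.1 e'.2 ⊆ ({e.1, e.2} : Set E) ∩ {e'.1, e'.2}

section MeetOnlyAtEnds

variable {E : Type*} [AddCommGroup E] [Module ℝ E] (f : E →ᵃ[ℝ] ℝ) {x y u v m m' : E}

lemma MeetOnlyAtEnds.symm {e e' : E × E} (h : MeetOnlyAtEnds e e') : MeetOnlyAtEnds e' e :=
  fun _ hz => (h ⟨hz.2, hz.1⟩).symm

lemma meetOnlyAtEnds_of_apply_eq_zero (hm : f m = 0) (hu : f u = 0) (hv : f v = 0)
    (hmuv : m = u ∨ m = v) (hx : x = m ∨ 0 < f x) (hy : y = m ∨ 0 < f y) (hxy : x ≠ y) :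
    MeetOnlyAtEnds (x, y) (u, v) := by
  rintro z ⟨hzxy, hzuv⟩
  have hz0 : f z = 0 := by simpa [hu, hv] using f.apply_mem_segment hzuv
  obtain ⟨rfl, hzxy'⟩ := f.eq_of_mem_segment_of_apply_nonpos hm hx hy hxy hzxy hz0.le
  exact ⟨hzxy', hmuv⟩

lemma disjoint_segment_of_opposite_sides (hm : f m = 0) (hm' : f m' = 0) (hmm' : m ≠ m')
    {x' y' : E} (hx : x = m ∨ 0 < f x) (hy : y = m ∨ 0 < f y) (hxy : x ≠ y)
    (hx' : x' = m' ∨ 0 < (-f) x') (hy' : y' = m' ∨ 0 < (-f) y') (hxy' : x' ≠ y') :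
    Disjoint (segment ℝ x y) (segment ℝ x' y') := by
  have hm'' : (-f) m' = 0 := by simp [hm']
  have nonneg {g : E →ᵃ[ℝ] ℝ} {n p : E} (hn : g n = 0) (hp : p = n ∨ 0 < g p) : 0 ≤ g p := by
    rcases hp with rfl | hp
    exacts [hn.ge, hp.le]
  refine Set.disjoint_left.2 fun z hz hz' => hmm' ?_
  have h₁ := (convex_Ici 0).segment_subset (nonneg hm hx) (nonneg hm hy) (f.apply_mem_segment hz)
  have h₂ := (convex_Ici 0).segment_subset (nonneg hm'' hx') (nonneg hm'' hy')
    ((-f).apply_mem_segment hz')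
  simp only [Set.mem_Ici, AffineMap.coe_neg, Pi.neg_apply, neg_nonneg] at h₁ h₂
  rw [← (f.eq_of_mem_segment_of_apply_nonpos hm hx hy hxy hz h₂).1,
    ((-f).eq_of_mem_segment_of_apply_nonpos hm'' hx' hy' hxy' hz' (by simpa using h₁)).1]

end MeetOnlyAtEnds

lemma exists_eq_smul_of_wedge_eq_zero {u v : Pt} (hu : u ≠ 0) (h : wedge u v = 0) :
    ∃ t : ℝ, v = t • u := by
  unfold wedge at h
  rcases eq_or_ne u.1 0 with h1 | h1
  · have h2 : u.2 ≠ 0 := fun h2 => hu (Prod.ext h1 h2)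
    have hv1 : v.1 = 0 := by
      rw [h1, zero_mul, zero_sub, neg_eq_zero] at h
      exact (mul_eq_zero.1 h).resolve_left h2
    refine ⟨v.2 / u.2, Prod.ext ?_ ?_⟩ <;> simp [h1, hv1, h2]
  · refine ⟨v.1 / u.1, Prod.ext ?_ ?_⟩
    · simp [h1]
    · simp only [Prod.smul_snd, smul_eq_mul]
      field_simp
      linarith

lemma collinear_of_wedge_eq_zero {p q r : Pt} (h : wedge (q - p) (r - p) = 0) :
    Collinear ℝ ({p, q, r} : Set Pt) := by
  rcases eq_or_ne q p with rfl | hqp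
  · simpa using collinear_pair ℝ q r
  obtain ⟨t, ht⟩ := exists_eq_smul_of_wedge_eq_zero (sub_ne_zero.2 hqp) h
  have hr : r = AffineMap.lineMap p q t := by
    rw [AffineMap.lineMap_apply, vsub_eq_sub, ← ht, vadd_eq_add, sub_add_cancel]
  have := collinear_insert_of_mem_affineSpan_pair
    (hr ▸ AffineMap.lineMap_mem_affineSpan_pair t p q : r ∈ line[ℝ, p, q])
  rwa [Set.insert_comm, Set.pair_comm] at this

lemma GenPos.mono {T V : Finset Pt} (hV : GenPos V) (h : T ⊆ V) : GenPos T :=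
  fun p hp q hq r hr => hV p (h hp) q (h hq) r (h hr)

lemma GenPos.wedge_ne_zero {V : Finset Pt} (hV : GenPos V) {p q r : Pt}
    (hp : p ∈ V) (hq : q ∈ V) (hr : r ∈ V) (hpq : p ≠ q) (hpr : p ≠ r) (hqr : q ≠ r) :
    wedge (q - p) (r - p) ≠ 0 :=
  fun h => hV p hp q hq r hr hpq hpr hqr (collinear_of_wedge_eq_zero h)

def cotAngle (w u : Pt) : ℝ := (w.1 * u.1 + w.2 * u.2) / wedge w u

lemma wedge_nonneg_of_cotAngle_le {w u v : Pt} (hu : 0 < wedge w u) (hv : 0 < wedge w v)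
    (h : cotAngle w v ≤ cotAngle w u) : 0 ≤ wedge u v := by
  rw [cotAngle, cotAngle, div_le_div_iff₀ hv hu] at h
  have hw : 0 < w.1 ^ 2 + w.2 ^ 2 := by
    by_contra hw
    have h1 : w.1 = 0 := by nlinarith [sq_nonneg w.1, sq_nonneg w.2]
    have h2 : w.2 = 0 := by nlinarith [sq_nonneg w.1, sq_nonneg w.2]
    simp [wedge, h1, h2] at hu
  have key : (w.1 ^ 2 + w.2 ^ 2) * wedge u v =
      (w.1 * u.1 + w.2 * u.2) * wedge w v - (w.1 * v.1 + w.2 * v.2) * wedge w u := by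
    unfold wedge; ring
  exact (mul_nonneg_iff_of_pos_left hw).1 (by linarith)

section AngularExtremes

variable {p w : Pt} {W : Finset Pt}

lemma exists_forall_wedge_pos (hW : W.Nonempty)
    (hgp : ∀ q ∈ W, ∀ r ∈ W, q ≠ r → wedge (q - p) (r - p) ≠ 0)
    (hw : ∀ q ∈ W, 0 < wedge w (q - p)) :
    ∃ m ∈ W, ∀ q ∈ W, q ≠ m → 0 < wedge (m - p) (q - p) := by
  obtain ⟨m, hm, hmax⟩ := W.exists_max_image (fun q => cotAngle w (q - p)) hW
  exact ⟨m, hm, fun q hq hqm => (wedge_nonneg_of_cotAngle_le (hw m hm) (hw q hq)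
    (hmax q hq)).lt_of_ne' (hgp m hm q hq (Ne.symm hqm))⟩

lemma exists_forall_wedge_neg (hW : W.Nonempty)
    (hgp : ∀ q ∈ W, ∀ r ∈ W, q ≠ r → wedge (q - p) (r - p) ≠ 0)
    (hw : ∀ q ∈ W, 0 < wedge w (q - p)) :
    ∃ m ∈ W, ∀ q ∈ W, q ≠ m → wedge (m - p) (q - p) < 0 := by
  obtain ⟨m, hm, hmin⟩ := W.exists_min_image (fun q => cotAngle w (q - p)) hW
  refine ⟨m, hm, fun q hq hqm => ?_⟩
  have := (wedge_nonneg_of_cotAngle_le (hw q hq) (hw m hm) (hmin q hq)).lt_of_ne'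
    (hgp q hq m hm hqm)
  linarith [wedge_swap (m - p) (q - p)]

end AngularExtremes

lemma exists_next_apex {V : Finset Pt} (hV : GenPos V) {p s w : Pt} (hp : p ∈ V) (hs : s ∈ V)
    (hsp : s ≠ p) (hw : ∀ q ∈ V, q ≠ p → 0 < wedge w (q - p)) :
    ∃ m ∈ V.erase p, (s = m → V.erase p = {m}) ∧
      ∃ w', (∀ q ∈ V.erase p, q ≠ m → 0 < wedge w' (q - m)) ∧ wedge w' (p - m) = 0 := by
  have hsW : s ∈ V.erase p := Finset.mem_erase.2 ⟨hsp, hs⟩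
  have hgp : ∀ q ∈ V.erase p, ∀ r ∈ V.erase p, q ≠ r → wedge (q - p) (r - p) ≠ 0 :=
    fun q hq r hr hqr => hV.wedge_ne_zero hp (Finset.mem_of_mem_erase hq)
      (Finset.mem_of_mem_erase hr) (Finset.ne_of_mem_erase hq).symm
      (Finset.ne_of_mem_erase hr).symm hqr
  have hwW : ∀ q ∈ V.erase p, 0 < wedge w (q - p) :=
    fun q hq => hw q (Finset.mem_of_mem_erase hq) (Finset.ne_of_mem_erase hq)
  obtain ⟨m, hm, hmin⟩ := exists_forall_wedge_pos ⟨s, hsW⟩ hgp hwW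
  obtain ⟨M, hM, hmax⟩ := exists_forall_wedge_neg ⟨s, hsW⟩ hgp hwW
  by_cases hsm : s = m → V.erase p = {m}
  · refine ⟨m, hm, hsm, m - p, fun q hq hqm => ?_, by
      unfold wedge; simp only [Prod.fst_sub, Prod.snd_sub]; ring⟩
    have : wedge (m - p) (q - m) = wedge (m - p) (q - p) := by
      unfold wedge; simp only [Prod.fst_sub, Prod.snd_sub]; ring
    exact this ▸ hmin q hq hqm
  · rw [Classical.not_imp] at hsm
    obtain ⟨rfl, hne⟩ := hsm
    obtain ⟨q, hq, hqs⟩ : ∃ q ∈ V.erase p, q ≠ s := by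
      by_contra! h
      exact hne (Finset.eq_singleton_iff_unique_mem.2 ⟨hsW, h⟩)
    have hsM : s ≠ M := by rintro rfl; linarith [hmin q hq hqs, hmax q hq hqs]
    refine ⟨M, hM, fun h => absurd h hsM, p - M, fun q hq hqM => ?_, by unfold wedge; ring⟩
    have : wedge (p - M) (q - M) = -wedge (M - p) (q - p) := by
      unfold wedge; simp only [Prod.fst_sub, Prod.snd_sub]; ring
    linarith [hmax q hq hqM]

lemma edgeList_cons_cons (x y : Pt) (l : List Pt) :
    edgeList (x :: y :: l) = (x, y) :: edgeList (y :: l) := rfl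

lemma edgeList_singleton (x : Pt) : edgeList [x] = [] := rfl

lemma mem_of_mem_edgeList {e : Pt × Pt} {l : List Pt} (h : e ∈ edgeList l) :
    e.1 ∈ l ∧ e.2 ∈ l :=
  ⟨(List.of_mem_zip h).1, List.mem_of_mem_tail (List.of_mem_zip h).2⟩

lemma fst_ne_snd_of_mem_edgeList {e : Pt × Pt} {l : List Pt} (hl : l.Nodup)
    (h : e ∈ edgeList l) : e.1 ≠ e.2 := by
  induction l with
  | nil => simp [edgeList] at h
  | cons x t ih =>
    cases t with
    | nil => simp [edgeList] at h
    | cons y t =>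
      rw [edgeList_cons_cons, List.mem_cons] at h
      rcases h with rfl | h
      · exact fun hxy : x = y => (List.nodup_cons.1 hl).1 (hxy ▸ List.mem_cons_self)
      · exact ih (List.nodup_cons.1 hl).2 h

lemma edgeList_append {l₁ l₂ : List Pt} {u v : Pt} (hu : l₁.getLast? = some u)
    (hv : l₂.head? = some v) : edgeList (l₁ ++ l₂) = edgeList l₁ ++ (u, v) :: edgeList l₂ := by
  obtain ⟨r, rfl⟩ := List.head?_eq_some_iff.1 hv
  induction l₁ with
  | nil => simp at hu
  | cons x t ih =>
    cases t with
    | nil => simp only [List.getLast?_singleton, Option.some.injEq] at hu; subst hu; rfl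
    | cons y t =>
      rw [List.getLast?_cons_cons] at hu
      rw [List.cons_append, List.cons_append, edgeList_cons_cons, ← List.cons_append, ih hu,
        edgeList_cons_cons, List.cons_append]

lemma mem_edgeList_reverse {x y : Pt} {l : List Pt} :
    (x, y) ∈ edgeList l.reverse ↔ (y, x) ∈ edgeList l := by
  induction l with
  | nil => simp [edgeList]
  | cons z t ih =>
    cases t with
    | nil => simp [edgeList]
    | cons w t =>
      rw [List.reverse_cons, edgeList_append (u := w) (by simp) rfl, edgeList_cons_cons]
      simp only [List.mem_append, List.mem_cons, ih, Prod.ext_iff, edgeList_singleton,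
        List.not_mem_nil, or_false]
      tauto

lemma PlanePath.mem_iff {S : Finset Pt} {l : List Pt} (h : PlanePath S l) {x : Pt} :
    x ∈ l ↔ x ∈ S := by
  rw [← h.2.1, List.mem_toFinset]

lemma planePath_singleton (p : Pt) : PlanePath {p} [p] :=
  ⟨List.nodup_singleton p, rfl, by simp [edgeList_singleton]⟩

lemma PlanePath.reverse {S : Finset Pt} {l : List Pt} (h : PlanePath S l) :
    PlanePath S l.reverse := by
  refine ⟨List.nodup_reverse.2 h.1, by rw [List.toFinset_reverse, h.2.1], ?_⟩
  rintro ⟨x, y⟩ he ⟨x', y'⟩ he' hne z hz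
  have := h.2.2 (y, x) (mem_edgeList_reverse.1 he) (y', x') (mem_edgeList_reverse.1 he')
    (by simpa [and_comm] using hne) (by rwa [segment_symm ℝ y, segment_symm ℝ y'])
  simpa [or_comm] using this

lemma PlanePath.append {S₁ S₂ : Finset Pt} {l₁ l₂ : List Pt} {u v : Pt}
    (h₁ : PlanePath S₁ l₁) (h₂ : PlanePath S₂ l₂) (hu : l₁.getLast? = some u)
    (hv : l₂.head? = some v) (hS : Disjoint S₁ S₂)
    (h₁₂ : ∀ e ∈ edgeList l₁, ∀ e' ∈ edgeList l₂, MeetOnlyAtEnds e e')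
    (h₁uv : ∀ e ∈ edgeList l₁, MeetOnlyAtEnds e (u, v))
    (h₂uv : ∀ e ∈ edgeList l₂, MeetOnlyAtEnds e (u, v)) :
    PlanePath (S₁ ∪ S₂) (l₁ ++ l₂) := by
  refine ⟨List.nodup_append.2 ⟨h₁.1, h₂.1, ?_⟩, by rw [List.toFinset_append, h₁.2.1, h₂.2.1], ?_⟩
  · rintro x hx _ hx' rfl
    exact Finset.disjoint_left.1 hS (h₁.mem_iff.1 hx) (h₂.mem_iff.1 hx')
  · intro e he e' he' hne
    rw [edgeList_append hu hv, List.mem_append, List.mem_cons] at he he'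
    rcases he with he | rfl | he <;> rcases he' with he' | rfl | he'
    · exact h₁.2.2 e he e' he' hne
    · exact h₁uv e he
    · exact h₁₂ e he e' he'
    · exact (h₁uv e' he').symm
    · exact absurd rfl hne
    · exact (h₂uv e' he').symm
    · exact (h₁₂ e' he' e he).symm
    · exact h₂uv e he
    · exact h₂.2.2 e he e' he' hne

lemma forall_edgeList_meetOnlyAtEnds {l : List Pt} (hl : l.Nodup) (f : Pt →ᵃ[ℝ] ℝ) {m u v : Pt}
    (hm : f m = 0) (hu : f u = 0) (hv : f v = 0) (hmuv : m = u ∨ m = v)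
    (hlf : ∀ x ∈ l, x = m ∨ 0 < f x) : ∀ e ∈ edgeList l, MeetOnlyAtEnds e (u, v) :=
  fun _ he => meetOnlyAtEnds_of_apply_eq_zero f hm hu hv hmuv
    (hlf _ (mem_of_mem_edgeList he).1) (hlf _ (mem_of_mem_edgeList he).2)
    (fst_ne_snd_of_mem_edgeList hl he)

lemma PlanePath.append_of_opposite_sides (f : Pt →ᵃ[ℝ] ℝ) {S₁ S₂ : Finset Pt}
    {l₁ l₂ : List Pt} {a b : Pt} (h₁ : PlanePath S₁ l₁) (h₂ : PlanePath S₂ l₂)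
    (ha : l₁.getLast? = some a) (hb : l₂.head? = some b) (hab : a ≠ b) (hfa : f a = 0)
    (hfb : f b = 0) (hl₁ : ∀ x ∈ l₁, x = a ∨ 0 < f x) (hl₂ : ∀ x ∈ l₂, x = b ∨ f x < 0) :
    PlanePath (S₁ ∪ S₂) (l₁ ++ l₂) := by
  have hl₂' : ∀ x ∈ l₂, x = b ∨ 0 < (-f) x := by simpa using hl₂
  have hS : Disjoint S₁ S₂ := by
    refine Finset.disjoint_left.2 fun x hx₁ hx₂ => ?_
    rcases hl₁ x (h₁.mem_iff.2 hx₁) with rfl | hx₁ <;>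
      rcases hl₂ x (h₂.mem_iff.2 hx₂) with rfl | hx₂
    exacts [hab rfl, hx₂.ne hfa, hx₁.ne' hfb, hx₁.not_gt hx₂]
  refine h₁.append h₂ ha hb hS (fun e he e' he' => ?_)
    (forall_edgeList_meetOnlyAtEnds h₁.1 f hfa hfa hfb (Or.inl rfl) hl₁)
    (forall_edgeList_meetOnlyAtEnds h₂.1 (-f) (by simpa) (by simpa) (by simpa) (Or.inr rfl) hl₂')
  have := disjoint_segment_of_opposite_sides f hfa hfb hab
    (hl₁ _ (mem_of_mem_edgeList he).1) (hl₁ _ (mem_of_mem_edgeList he).2)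
    (fst_ne_snd_of_mem_edgeList h₁.1 he) (hl₂' _ (mem_of_mem_edgeList he').1)
    (hl₂' _ (mem_of_mem_edgeList he').2) (fst_ne_snd_of_mem_edgeList h₂.1 he')
  exact fun z hz => absurd hz.2 (Set.disjoint_left.1 this hz.1)

theorem exists_planePath_to_apex (V : Finset Pt) (hV : GenPos V) {p s w : Pt} (hp : p ∈ V)
    (hs : s ∈ V) (hsp : s = p → V = {p}) (hw : ∀ q ∈ V, q ≠ p → 0 < wedge w (q - p)) :
    ∃ l, PlanePath V l ∧ l.head? = some s ∧ l.getLast? = some p := by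
  induction V using Finset.strongInduction generalizing p s w with
  | H V ih =>
  by_cases hsp' : s = p
  · subst hsp'
    rw [hsp rfl]
    exact ⟨[s], planePath_singleton s, rfl, rfl⟩
  obtain ⟨m, hm, hsm, w', hw', hpm⟩ := exists_next_apex hV hp hs hsp' hw
  obtain ⟨P, hP, hPs, hPm⟩ := ih _ (Finset.erase_ssubset hp) (hV.mono (Finset.erase_subset p V))
    hm (Finset.mem_erase.2 ⟨hsp', hs⟩) hsm hw'
  have hPside : ∀ x ∈ P, x = m ∨ 0 < side m w' x := fun x hx =>
    (eq_or_ne x m).imp_right (hw' x (hP.mem_iff.1 hx))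
  have hPp := hP.append (planePath_singleton p) hPm rfl
    (Finset.disjoint_singleton_right.2 (Finset.notMem_erase p V)) (by simp [edgeList_singleton])
    (forall_edgeList_meetOnlyAtEnds hP.1 (side m w') (by simp [side_apply, wedge])
      (by simp [side_apply, wedge]) hpm (Or.inl rfl) hPside)
    (by simp [edgeList_singleton])
  rw [Finset.erase_union_eq p V hp] at hPp
  exact ⟨P ++ [p], hPp, by simp [hPs], by simp⟩

lemma det3_swap (a b p : Pt) : det3 b a p = -det3 a b p := by
  unfold det3; ring

lemma GenPos.eq_or_eq_of_det3_eq_zero {S : Finset Pt} (hS : GenPos S) {a b q : Pt} (ha : a ∈ S)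
    (hb : b ∈ S) (hq : q ∈ S) (hab : a ≠ b) (h : det3 a b q = 0) : q = a ∨ q = b := by
  by_contra! hqab
  exact hS.wedge_ne_zero ha hb hq hab hqab.1.symm hqab.2.symm h

def leftPart (S : Finset Pt) (a b : Pt) : Finset Pt := insert a (S.filter (0 < det3 a b ·))

lemma eq_or_det3_pos_of_mem_leftPart {S : Finset Pt} {a b x : Pt} (hx : x ∈ leftPart S a b) :
    x = a ∨ 0 < det3 a b x := by
  simp only [leftPart, Finset.mem_insert, Finset.mem_filter] at hx
  exact hx.imp_right And.right

lemma GenPos.leftPart_union_leftPart {S : Finset Pt} (hS : GenPos S) {a b : Pt} (ha : a ∈ S)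
    (hb : b ∈ S) (hab : a ≠ b) : leftPart S a b ∪ leftPart S b a = S := by
  ext x
  simp only [leftPart, Finset.mem_union, Finset.mem_insert, Finset.mem_filter, det3_swap a b x,
    neg_pos]
  constructor
  · rintro ((rfl | ⟨hx, -⟩) | (rfl | ⟨hx, -⟩)) <;> assumption
  · intro hx
    rcases lt_trichotomy (det3 a b x) 0 with h | h | h
    · exact Or.inr (Or.inr ⟨hx, h⟩)
    · rcases hS.eq_or_eq_of_det3_eq_zero ha hb hx hab h with rfl | rfl
      exacts [Or.inl (Or.inl rfl), Or.inr (Or.inl rfl)]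
    · exact Or.inl (Or.inr ⟨hx, h⟩)

lemma GenPos.exists_planePath_leftPart {S : Finset Pt} (hS : GenPos S) {a b s : Pt}
    (ha : a ∈ S) (hs : s ∈ S) (hsa : s ≠ a) (hsab : 0 < det3 a b s) :
    ∃ l, PlanePath (leftPart S a b) l ∧ l.head? = some s ∧ l.getLast? = some a :=
  exists_planePath_to_apex _ (hS.mono (Finset.insert_subset ha (Finset.filter_subset _ S)))
    (Finset.mem_insert_self a _) (Finset.mem_insert_of_mem (Finset.mem_filter.2 ⟨hs, hsab⟩))
    (fun h => absurd h hsa) (w := b - a) fun _ hq hqa =>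
      (eq_or_det3_pos_of_mem_leftPart hq).resolve_left hqa

theorem stmt_17_general (S : Finset Pt) (hgp : GenPos S)
    (a b : Pt) (ha : a ∈ S) (hb : b ∈ S) (hab : a ≠ b)
    (s t : Pt) (hs : s ∈ S) (ht : t ∈ S)
    (hsa : s ≠ a) (htb : t ≠ b)
    (hsup : 0 < det3 a b s) (htdown : det3 a b t < 0) :
    ∃ l : List Pt, PlanePath S l ∧ l.head? = some s ∧ l.getLast? = some t ∧
      IsEdgeOf a b l := by
  obtain ⟨P, hP, hPs, hPa⟩ := hgp.exists_planePath_leftPart ha hs hsa hsup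
  obtain ⟨Q, hQ, hQt, hQb⟩ :=
    hgp.exists_planePath_leftPart hb ht htb (by rwa [det3_swap, neg_pos])
  have hQb' : Q.reverse.head? = some b := by rwa [List.head?_reverse]
  have hPQ := hP.append_of_opposite_sides (side a (b - a)) hQ.reverse hPa hQb' hab
    (by simp [side_apply, wedge]) (wedge_self (b - a))
    (fun x hx => eq_or_det3_pos_of_mem_leftPart (hP.mem_iff.1 hx))
    (fun x hx => (eq_or_det3_pos_of_mem_leftPart (hQ.reverse.mem_iff.1 hx)).imp_right
      fun h => by rwa [det3_swap, neg_pos] at h)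
  rw [hgp.leftPart_union_leftPart ha hb hab] at hPQ
  refine ⟨P ++ Q.reverse, hPQ, by simp [hPs], by simp [hQt], Or.inl ?_⟩
  rw [edgeList_append hPa hQb']
  simp

/-- If `s` and `t` lie in distinct open halfplanes determined by the line
through `a` and `b` (with `s, t ∉ {a, b}`), then there is a plane Hamiltonian path on `S`
with endpoints `s` and `t` containing the segment `ab` as an edge. -/
theorem stmt_17 (S : Finset Pt) (hgp : GenPos S)
    (a b : Pt) (ha : a ∈ S) (hb : b ∈ S) (hab : a ≠ b)
    (s t : Pt) (hs : s ∈ S) (ht : t ∈ S)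
    (hsa : s ≠ a) (hsb : s ≠ b) (hta : t ≠ a) (htb : t ≠ b)
    (hsup : 0 < det3 a b s) (htdown : det3 a b t < 0) :
    ∃ l : List Pt, PlanePath S l ∧ l.head? = some s ∧ l.getLast? = some t ∧
      IsEdgeOf a b l :=
  stmt_17_general S hgp a b ha hb hab s t hs ht hsa htb hsup htdown
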